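/- Let K be a compact Hausdorff space and S = ⋃_{i∈ℕ} 𝓘(i) a covering of K by regular isolated families, with the associated sets I(i), J(i), the recursively defined families 𝓘(i) for i ∈ Σ, and the open sets G(j,𝓜). Let H be a nonempty closed subset of K. Then there exists a ≺-minimal j ∈ Σ with H ∩ closure(I(j)) ≠ ∅; moreover H ∩ closure(I(j)) ⊆ I(j), and there is a unique nonempty finite subset 𝓜 of 𝓘(j) such that H ∩ M ≠ ∅ for all M ∈ 𝓜 and H ⊆ G(j,𝓜). -/

import Mathlib

open Set TopologicalSpace

/-- A family of subsets is isolated if each member is disjoint from the closure of the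
union of the other members. -/
def IsIsolatedFamily {K : Type*} [TopologicalSpace K] (ℐ : Set (Set K)) : Prop :=
  ∀ N ∈ ℐ, N ∩ closure (⋃₀ (ℐ \ {N})) = ∅

/-- A regular isolated family: `N = closure N \ closure (⋃ (ℐ \ {N}))` for each member. -/
def IsRegularIsolatedFamily {K : Type*} [TopologicalSpace K] (ℐ : Set (Set K)) : Prop :=
  IsIsolatedFamily ℐ ∧ ∀ N ∈ ℐ, N = closure N \ closure (⋃₀ (ℐ \ {N}))

/-- `Jof F = closure (⋃ F) \ ⋃ F` for a family of sets `F`. -/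
def Jof {K : Type*} [TopologicalSpace K] (F : Set (Set K)) : Set K :=
  closure (⋃₀ F) \ ⋃₀ F

/-- Auxiliary recursion defining the families `𝓘(i_0,…,i_k)`, with the sequence of
indices given in *reverse* order (most recent index first):
`𝓘(i_0,…,i_k,i_{k+1}) = {N ∩ J(i_0,…,i_k) : N ∈ 𝓘(i_{k+1})}`. -/
def famRev {K : Type*} [TopologicalSpace K] (𝓘 : ℕ → Set (Set K)) : List ℕ → Set (Set K)
  | [] => ∅
  | [i] => 𝓘 i
  | i :: j :: l => (fun N => N ∩ Jof (famRev 𝓘 (j :: l))) '' 𝓘 i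

/-- The family `𝓘(i_0,…,i_k)`, the index sequence given in natural order. -/
def fam {K : Type*} [TopologicalSpace K] (𝓘 : ℕ → Set (Set K)) (l : List ℕ) :
    Set (Set K) :=
  famRev 𝓘 l.reverse

/-- The set `I(i_0,…,i_k) = ⋃ 𝓘(i_0,…,i_k)`. -/
def ISet {K : Type*} [TopologicalSpace K] (𝓘 : ℕ → Set (Set K)) (l : List ℕ) : Set K :=
  ⋃₀ fam 𝓘 l

/-- The set `J(i_0,…,i_k) = closure I(i_0,…,i_k) \ I(i_0,…,i_k)`. -/
def JSet {K : Type*} [TopologicalSpace K] (𝓘 : ℕ → Set (Set K)) (l : List ℕ) : Set K :=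
  closure (ISet 𝓘 l) \ ISet 𝓘 l

/-- Membership in `Σ`: nonempty strictly increasing finite sequences of naturals. -/
def SigmaMem (l : List ℕ) : Prop :=
  l ≠ [] ∧ l.Chain' (· < ·)

/-- The total order `≺` on finite sequences: `a ≺ b` iff either they first differ at a
position `r` where `a` is smaller, or `b` is a proper initial segment of `a`. -/
def SLt (a b : List ℕ) : Prop :=
  (∃ (r : ℕ) (x y : ℕ), (∀ s < r, a[s]? = b[s]?) ∧ a[r]? = some x ∧ b[r]? = some y ∧ x < y)
  ∨ (b <+: a ∧ b ≠ a)

/-- The open set `G(j,𝓜) = K \ (⋃_{i ≺ j} closure I(i) ∪ closure ⋃(𝓘(j) \ 𝓜))`. -/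
def Gset {K : Type*} [TopologicalSpace K] (𝓘 : ℕ → Set (Set K)) (jl : List ℕ)
    (𝓜 : Set (Set K)) : Set K :=
  (⋃₀ {S | ∃ a : List ℕ, SigmaMem a ∧ SLt a jl ∧ S = closure (ISet 𝓘 a)} ∪
    closure (⋃₀ (fam 𝓘 jl \ 𝓜)))ᶜ
section Aux
variable {K : Type*} [TopologicalSpace K]

omit [TopologicalSpace K] in
lemma sUnion_eq_union_diff {F : Set (Set K)} {N : Set K} (hN : N ∈ F) :
    ⋃₀ F = N ∪ ⋃₀ (F \ {N}) := by
  ext x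
  simp only [Set.mem_sUnion, Set.mem_union, Set.mem_diff, Set.mem_singleton_iff]
  constructor
  · rintro ⟨M, hM, hx⟩
    by_cases h : M = N
    · exact Or.inl (h ▸ hx)
    · exact Or.inr ⟨M, ⟨hM, h⟩, hx⟩
  · rintro (hx | ⟨M, ⟨hM, _⟩, hx⟩)
    · exact ⟨N, hN, hx⟩
    · exact ⟨M, hM, hx⟩

/-- Members of the family `(· ∩ C) '' 𝓘i` are isolated and relatively open in the closure
of the union. -/
lemma memberProps {𝓘i : Set (Set K)} (hri : IsRegularIsolatedFamily 𝓘i)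
    {C : Set K} (hC : IsClosed C) :
    ∀ M ∈ (fun N => N ∩ C) '' 𝓘i,
      (M ∩ closure (⋃₀ ((fun N => N ∩ C) '' 𝓘i \ {M})) = ∅) ∧
      ∃ U, IsOpen U ∧ M = closure (⋃₀ ((fun N => N ∩ C) '' 𝓘i)) ∩ U := by
  rintro M ⟨N, hN, rfl⟩
  dsimp only
  obtain ⟨hiso, hregN⟩ := hri
  set R := ⋃₀ (𝓘i \ {N}) with hR
  have hsub : ⋃₀ ((fun N => N ∩ C) '' 𝓘i \ {N ∩ C}) ⊆ R := by
    rintro x ⟨M', ⟨⟨N', hN', rfl⟩, hMne⟩, hx⟩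
    have hN'N : N' ≠ N := by
      rintro rfl; exact hMne rfl
    exact ⟨N', ⟨hN', hN'N⟩, hx.1⟩
  have hNdisj : N ∩ closure R = ∅ := hiso N hN
  constructor
  · apply Set.eq_empty_of_subset_empty
    calc (N ∩ C) ∩ closure (⋃₀ ((fun N => N ∩ C) '' 𝓘i \ {N ∩ C}))
        ⊆ N ∩ closure R := by
          exact Set.inter_subset_inter (Set.inter_subset_left) (closure_mono hsub)
      _ = ∅ := hNdisj
  · refine ⟨(closure R)ᶜ, isClosed_closure.isOpen_compl, ?_⟩
    have hTsub : ⋃₀ ((fun N => N ∩ C) '' 𝓘i) = (⋃₀ 𝓘i) ∩ C := by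
      ext x
      simp only [Set.mem_sUnion, Set.mem_image, Set.mem_inter_iff]
      constructor
      · rintro ⟨M', ⟨N', hN', rfl⟩, hx⟩; exact ⟨⟨N', hN', hx.1⟩, hx.2⟩
      · rintro ⟨⟨N', hN', hx⟩, hxC⟩; exact ⟨N' ∩ C, ⟨N', hN', rfl⟩, hx, hxC⟩
    have hclU : closure (⋃₀ 𝓘i) = closure N ∪ closure R := by
      rw [sUnion_eq_union_diff hN, closure_union]
    apply Set.Subset.antisymm
    · intro x hx
      refine ⟨subset_closure ?_, ?_⟩
      · rw [hTsub]; exact ⟨⟨N, hN, hx.1⟩, hx.2⟩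
      · intro hxR
        exact absurd (Set.mem_inter hx.1 hxR) (by rw [hNdisj]; exact fun h => h)
    · rintro x ⟨hxcl, hxU⟩
      have hxC' : x ∈ C := by
        have := closure_mono (hTsub ▸ Set.inter_subset_right :
          ⋃₀ ((fun N => N ∩ C) '' 𝓘i) ⊆ C) hxcl
        rwa [hC.closure_eq] at this
      have hx1 : x ∈ closure (⋃₀ 𝓘i) := by
        apply closure_mono _ hxcl
        rw [hTsub]; exact Set.inter_subset_left
      rw [hclU] at hx1
      have hxN : x ∈ N := by
        rw [hregN N hN]
        rcases hx1 with h | h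
        · exact ⟨h, hxU⟩
        · exact absurd h hxU
      exact ⟨hxN, hxC'⟩

end Aux
section Aux2
variable {K : Type*} [TopologicalSpace K]

lemma jof_closed {F : Set (Set K)}
    (h : ∀ M ∈ F, ∃ U, IsOpen U ∧ M = closure (⋃₀ F) ∩ U) : IsClosed (Jof F) := by
  classical
  choose U hUo hMU using h
  have key : ⋃₀ F = closure (⋃₀ F) ∩ ⋃ (M : Set K) (hM : M ∈ F), U M hM := by
    apply Set.Subset.antisymm
    · rintro x ⟨M, hM, hx⟩
      refine ⟨subset_closure ⟨M, hM, hx⟩, ?_⟩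
      refine Set.mem_iUnion.mpr ⟨M, Set.mem_iUnion.mpr ⟨hM, ?_⟩⟩
      have := hMU M hM
      rw [this] at hx
      exact hx.2
    · rintro x ⟨hxcl, hxU⟩
      obtain ⟨M, hM⟩ := Set.mem_iUnion.mp hxU
      obtain ⟨hMF, hxM⟩ := Set.mem_iUnion.mp hM
      have : x ∈ M := by rw [hMU M hMF]; exact ⟨hxcl, hxM⟩
      exact ⟨M, hMF, this⟩
  have : Jof F = closure (⋃₀ F) ∩ (⋃ (M : Set K) (hM : M ∈ F), U M hM)ᶜ := by
    ext x
    have hx := Set.ext_iff.mp key x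
    simp only [Set.mem_inter_iff] at hx
    simp only [Jof, Set.mem_diff, Set.mem_inter_iff, Set.mem_compl_iff]
    tauto
  rw [this]
  exact isClosed_closure.inter (isOpen_iUnion fun M => isOpen_iUnion fun hM => hUo M hM).isClosed_compl

lemma famRev_eq_image {𝓘 : ℕ → Set (Set K)} :
    ∀ r : List ℕ, r ≠ [] → ∃ (i : ℕ) (C : Set K),
      (r.tail = [] → C = Set.univ) ∧
      (r.tail ≠ [] → C = Jof (famRev 𝓘 r.tail)) ∧
      famRev 𝓘 r = (fun N => N ∩ C) '' 𝓘 i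
  | [], h => absurd rfl h
  | [i], _ => ⟨i, Set.univ, fun _ => rfl, fun h => absurd rfl h, by
      simp [famRev]⟩
  | i :: j :: t, _ => ⟨i, Jof (famRev 𝓘 (j :: t)), fun h => by simp at h,
      fun _ => rfl, rfl⟩

lemma famRev_props {𝓘 : ℕ → Set (Set K)} (hreg : ∀ i, IsRegularIsolatedFamily (𝓘 i)) :
    ∀ r : List ℕ, r ≠ [] →
      (∀ M ∈ famRev 𝓘 r, (M ∩ closure (⋃₀ (famRev 𝓘 r \ {M})) = ∅) ∧
        ∃ U, IsOpen U ∧ M = closure (⋃₀ famRev 𝓘 r) ∩ U) ∧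
      IsClosed (Jof (famRev 𝓘 r)) := by
  intro r
  induction r with
  | nil => intro h; exact absurd rfl h
  | cons i t ih =>
    intro _
    obtain ⟨i', C, hCuniv, hCjof, hfam⟩ := famRev_eq_image (𝓘 := 𝓘) (i :: t) (by simp)
    have hC : IsClosed C := by
      by_cases ht : t = []
      · rw [hCuniv (by simp [ht])]; exact isClosed_univ
      · rw [hCjof (by simpa using ht)]
        exact (ih ht).2
    have hmem := memberProps (hri := hreg i') (hC := hC)
    rw [← hfam] at hmem
    refine ⟨hmem, jof_closed (fun M hM => (hmem M hM).2)⟩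

variable {𝓘 : ℕ → Set (Set K)}

lemma fam_props (hreg : ∀ i, IsRegularIsolatedFamily (𝓘 i)) {l : List ℕ} (hl : l ≠ []) :
    (∀ M ∈ fam 𝓘 l, (M ∩ closure (⋃₀ (fam 𝓘 l \ {M})) = ∅) ∧
      ∃ U, IsOpen U ∧ M = closure (ISet 𝓘 l) ∩ U) ∧ IsClosed (JSet 𝓘 l) := by
  have hrev : l.reverse ≠ [] := by simpa using hl
  have h := famRev_props hreg l.reverse hrev
  exact h

lemma ISet_append {l : List ℕ} (hl : l ≠ []) (n : ℕ) :
    ISet 𝓘 (l ++ [n]) = (⋃₀ 𝓘 n) ∩ JSet 𝓘 l := by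
  obtain ⟨c, t, ht⟩ : ∃ c t, l.reverse = c :: t := by
    cases h : l.reverse with
    | nil => exact absurd (by simpa using h) hl
    | cons c t => exact ⟨c, t, rfl⟩
  have h1 : (l ++ [n]).reverse = n :: c :: t := by
    rw [List.reverse_append, ht]; rfl
  have h2 : fam 𝓘 (l ++ [n]) = (fun N => N ∩ Jof (famRev 𝓘 (c :: t))) '' 𝓘 n := by
    rw [fam, h1]; rfl
  have h3 : Jof (famRev 𝓘 (c :: t)) = JSet 𝓘 l := by
    rw [← ht]; rfl
  rw [ISet, h2, h3]
  ext x
  simp only [Set.mem_sUnion, Set.mem_image, Set.mem_inter_iff]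
  constructor
  · rintro ⟨M, ⟨N, hN, rfl⟩, hx⟩; exact ⟨⟨N, hN, hx.1⟩, hx.2⟩
  · rintro ⟨⟨N, hN, hx⟩, hxJ⟩; exact ⟨N ∩ JSet 𝓘 l, ⟨N, hN, rfl⟩, hx, hxJ⟩

lemma closure_ISet_append_subset (hreg : ∀ i, IsRegularIsolatedFamily (𝓘 i))
    {l : List ℕ} (hl : l ≠ []) (n : ℕ) :
    closure (ISet 𝓘 (l ++ [n])) ⊆ JSet 𝓘 l := by
  apply closure_minimal _ (fam_props hreg hl).2
  rw [ISet_append hl n]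
  exact Set.inter_subset_right

lemma JSet_subset_closure {l : List ℕ} : JSet 𝓘 l ⊆ closure (ISet 𝓘 l) :=
  Set.diff_subset

lemma closure_ISet_prefix (hreg : ∀ i, IsRegularIsolatedFamily (𝓘 i)) :
    ∀ {q p : List ℕ}, p ≠ [] → p <+: q → p ≠ q → closure (ISet 𝓘 q) ⊆ JSet 𝓘 p := by
  intro q
  induction q using List.reverseRecOn with
  | nil =>
    intro p hp hpre _
    exact absurd (List.prefix_nil.mp hpre) hp
  | append_singleton q' n ih =>
    intro p hp hpre hne
    obtain ⟨s, hs⟩ := hpre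
    rcases s.eq_nil_or_concat with rfl | ⟨s', n', rfl⟩
    · exact absurd (by simpa using hs) hne
    · have hs' : p ++ s' = q' ∧ n' = n := by
        simp only [List.concat_eq_append] at hs
        have hs2 : (p ++ s') ++ [n'] = q' ++ [n] := by
          rw [List.append_assoc]; exact hs
        have h2 := List.append_inj' hs2 rfl
        exact ⟨h2.1, by simpa using h2.2⟩
      have hpq' : p <+: q' := ⟨s', hs'.1⟩
      have hq'ne : q' ≠ [] := fun h => by
        rw [h, List.prefix_nil] at hpq'; exact hp hpq'
      by_cases hpq : p = q'
      · rw [hpq]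
        exact closure_ISet_append_subset hreg hq'ne n
      · calc closure (ISet 𝓘 (q' ++ [n])) ⊆ JSet 𝓘 q' :=
              closure_ISet_append_subset hreg hq'ne n
          _ ⊆ closure (ISet 𝓘 q') := JSet_subset_closure
          _ ⊆ JSet 𝓘 p := ih hp hpq' hpq

lemma closure_ISet_mono (hreg : ∀ i, IsRegularIsolatedFamily (𝓘 i))
    {p q : List ℕ} (hp : p ≠ []) (hpre : p <+: q) :
    closure (ISet 𝓘 q) ⊆ closure (ISet 𝓘 p) := by
  by_cases h : p = q
  · rw [h]
  · exact (closure_ISet_prefix hreg hp hpre h).trans JSet_subset_closure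

end Aux2
section Aux3
variable {K : Type*} [TopologicalSpace K] {𝓘 : ℕ → Set (Set K)}

lemma ISet_nil : ISet 𝓘 ([] : List ℕ) = ∅ := by
  simp [ISet, fam, famRev]

lemma ISet_singleton (m : ℕ) : ISet 𝓘 [m] = ⋃₀ 𝓘 m := by
  rw [ISet, fam, List.reverse_singleton]; rfl

omit [TopologicalSpace K] in
lemma chain'_lt_le_getElem {l : List ℕ} (h : l.Chain' (· < ·)) :
    ∀ t, ∀ ht : t < l.length, t ≤ l[t] := by
  intro t
  induction t with
  | zero => intro _; exact Nat.zero_le _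
  | succ t ih =>
    intro ht
    have h1 : l[t] < l[t + 1] := List.isChain_iff_getElem.mp h t (by omega)
    have h2 : t ≤ l[t] := ih (by omega)
    omega

lemma escape (hreg : ∀ i, IsRegularIsolatedFamily (𝓘 i)) {j : List ℕ} (hj : SigmaMem j)
    {x : K} (hx : x ∈ JSet 𝓘 j) {m : ℕ} (hxm : x ∈ ⋃₀ 𝓘 m) :
    ∃ s, s ≤ j.length ∧ SigmaMem (j.take s ++ [m]) ∧ x ∈ ISet 𝓘 (j.take s ++ [m]) ∧
      ∀ h : s < j.length, m < j[s] := by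
  classical
  have hjne := hj.1
  have hpw : List.Pairwise (· < ·) j := List.isChain_iff_pairwise.mp hj.2
  -- x lies in the J-set of every nonempty initial segment
  have hxJt : ∀ s, 1 ≤ s → s ≤ j.length → x ∈ JSet 𝓘 (j.take s) := by
    intro s h1 h2
    rcases eq_or_lt_of_le h2 with rfl | hlt
    · rwa [List.take_length]
    · have hne : j.take s ≠ [] := by
        intro hc
        have := congrArg List.length hc
        simp only [List.length_take, List.length_nil] at this
        omega
      have hpre : j.take s <+: j := List.take_prefix s j
      have hnee : j.take s ≠ j := by
        intro hc
        have := congrArg List.length hc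
        simp only [List.length_take] at this
        omega
      exact closure_ISet_prefix hreg hne hpre hnee (JSet_subset_closure hx)
  have hxnotI : ∀ s, s ≤ j.length → x ∉ ISet 𝓘 (j.take s) := by
    intro s hs hxI
    rcases Nat.eq_zero_or_pos s with rfl | h1
    · rw [List.take_zero, ISet_nil] at hxI; exact hxI
    · exact (hxJt s h1 hs).2 hxI
  -- the splitting position
  have hex : ∃ t, t = j.length ∨ ∃ y, j[t]? = some y ∧ m ≤ y := ⟨j.length, Or.inl rfl⟩
  set s := Nat.find hex with hsdef
  have hsle : s ≤ j.length := Nat.find_le (Or.inl rfl)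
  have hsmall : ∀ t, t < s → ∀ htl : t < j.length, j[t] < m := by
    intro t ht htl
    have hmin := Nat.find_min hex ht
    push_neg at hmin
    exact hmin.2 _ (List.getElem?_eq_getElem htl)
  -- the extended sequence is in Σ
  have hlen_take : (j.take s).length = s := by
    simp [List.length_take]; omega
  have hsig : SigmaMem (j.take s ++ [m]) := by
    refine ⟨by simp, ?_⟩
    refine List.isChain_iff_pairwise.mpr ?_
    rw [List.pairwise_append]
    refine ⟨List.Pairwise.sublist (List.take_sublist s j) hpw, List.pairwise_singleton _ _, ?_⟩
    intro a ha b hb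
    rw [List.mem_singleton] at hb
    subst hb
    obtain ⟨t, htlt, rfl⟩ := List.mem_iff_getElem.mp ha
    rw [List.getElem_take]
    exact hsmall t (by omega : t < s) (by have := htlt; rw [hlen_take] at this; omega)
  -- x belongs to the corresponding I-set
  have hxI : x ∈ ISet 𝓘 (j.take s ++ [m]) := by
    rcases Nat.eq_zero_or_pos s with hs0 | h1
    · rw [hs0, List.take_zero, List.nil_append, ISet_singleton]
      exact hxm
    · have hne : j.take s ≠ [] := by
        intro hc
        have := congrArg List.length hc
        rw [hlen_take] at this
        simp at this; omega
      rw [ISet_append hne]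
      exact ⟨hxm, hxJt s h1 hsle⟩
  refine ⟨s, hsle, hsig, hxI, ?_⟩
  intro hslt
  rcases Nat.find_spec hex with h | ⟨y, hy, hmy⟩
  · omega
  · rw [List.getElem?_eq_getElem hslt] at hy
    injection hy with hy
    subst hy
    rcases eq_or_lt_of_le hmy with heq | hlt'
    · exfalso
      have htake : j.take (s + 1) = j.take s ++ [m] := by
        rw [List.take_succ, List.getElem?_eq_getElem hslt]
        simp [← heq]
      exact hxnotI (s + 1) (by omega) (htake ▸ hxI)
    · exact hlt'

lemma slt_take_append {j : List ℕ} {s m : ℕ} (hs : s ≤ j.length)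
    (hm : ∀ h : s < j.length, m < j[s]) : SLt (j.take s ++ [m]) j := by
  have hlen_take : (j.take s).length = s := by simp [List.length_take]; omega
  rcases eq_or_lt_of_le hs with heq | hlt
  · right
    have : j.take s = j := by rw [heq, List.take_length]
    rw [this]
    exact ⟨List.prefix_append j [m], by
      intro hc
      have := congrArg List.length hc
      simp at this⟩
  · left
    refine ⟨s, m, j[s], ?_, ?_, List.getElem?_eq_getElem hlt, hm hlt⟩
    · intro t ht
      rw [List.getElem?_append, if_pos (by omega : t < (j.take s).length),
        List.getElem?_take, if_pos ht]
    · rw [List.getElem?_append_right (by omega : (j.take s).length ≤ s), hlen_take]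
      simp
end Aux3
section Chain
variable {K : Type*} [TopologicalSpace K]

/-- The extension property: the finite sequence `p` can be extended by one more index `n`
keeping `Σ`-membership and nonempty intersection of `H` with the closure of the `I`-set. -/
def ExtP (𝓘 : ℕ → Set (Set K)) (H : Set K) (p : List ℕ) : Prop :=
  ∃ n, SigmaMem (p ++ [n]) ∧ (H ∩ closure (ISet 𝓘 (p ++ [n]))).Nonempty

open Classical in
/-- The greedy chain of finite sequences. -/
noncomputable def chainF (𝓘 : ℕ → Set (Set K)) (H : Set K) : ℕ → List ℕ
  | 0 => []
  | k + 1 =>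
    if h : ExtP 𝓘 H (chainF 𝓘 H k) then chainF 𝓘 H k ++ [Nat.find h] else chainF 𝓘 H k

variable {𝓘 : ℕ → Set (Set K)} {H : Set K}

open Classical in
lemma chainF_succ_of_ext {k : ℕ} (h : ExtP 𝓘 H (chainF 𝓘 H k)) :
    chainF 𝓘 H (k + 1) = chainF 𝓘 H k ++ [Nat.find h] := by
  rw [chainF, dif_pos h]

lemma chainF_mono {k k' : ℕ} (h : k ≤ k') : chainF 𝓘 H k <+: chainF 𝓘 H k' := by
  induction k' with
  | zero => rw [Nat.le_zero.mp h]
  | succ m ih =>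
    rcases Nat.lt_or_ge k (m + 1) with hk | hk
    · have hp : chainF 𝓘 H k <+: chainF 𝓘 H m := ih (by omega)
      apply hp.trans
      rw [chainF]
      split
      · exact List.prefix_append _ _
      · exact List.prefix_refl _
    · rw [Nat.le_antisymm h hk]

lemma chainF_length {k : ℕ} (hgood : ∀ r < k, ExtP 𝓘 H (chainF 𝓘 H r)) :
    (chainF 𝓘 H k).length = k := by
  induction k with
  | zero => rfl
  | succ m ih =>
    rw [chainF_succ_of_ext (hgood m (by omega)), List.length_append,
      ih (fun r hr => hgood r (by omega))]
    rfl

open Classical in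
lemma chainF_getElem {k r : ℕ} (hr : r < k) (hgood : ∀ r' < k, ExtP 𝓘 H (chainF 𝓘 H r'))
    (hh : ExtP 𝓘 H (chainF 𝓘 H r)) (hlt : r < (chainF 𝓘 H k).length) :
    (chainF 𝓘 H k)[r] = Nat.find hh := by
  have hlenr : (chainF 𝓘 H r).length = r := chainF_length (fun r' h => hgood r' (by omega))
  have h1 : chainF 𝓘 H (r + 1) = chainF 𝓘 H r ++ [Nat.find hh] := chainF_succ_of_ext hh
  have hlen1 : (chainF 𝓘 H (r + 1)).length = r + 1 :=
    chainF_length (fun r' h => hgood r' (by omega))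
  have hpre : chainF 𝓘 H (r + 1) <+: chainF 𝓘 H k := chainF_mono (by omega)
  have h2 : (chainF 𝓘 H (r + 1))[r]'(by omega) = Nat.find hh := by
    rw [List.getElem_of_eq h1 (by omega)]
    exact List.getElem_concat_length hlenr.symm _
  exact ((hpre.getElem (by omega)).symm).trans h2

lemma chainF_spec {k : ℕ} (hk : 0 < k) (hgood : ∀ r < k, ExtP 𝓘 H (chainF 𝓘 H r)) :
    SigmaMem (chainF 𝓘 H k) ∧ (H ∩ closure (ISet 𝓘 (chainF 𝓘 H k))).Nonempty := by
  classical
  obtain ⟨m, rfl⟩ : ∃ m, k = m + 1 := ⟨k - 1, by omega⟩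
  have hh := hgood m (by omega)
  rw [chainF_succ_of_ext hh]
  exact Nat.find_spec hh

lemma chainF_take {k r : ℕ} (hr : r ≤ k) (hgood : ∀ r' < k, ExtP 𝓘 H (chainF 𝓘 H r')) :
    (chainF 𝓘 H k).take r = chainF 𝓘 H r := by
  obtain ⟨t, ht⟩ := chainF_mono (𝓘 := 𝓘) (H := H) hr
  rw [← ht]
  exact List.take_left' (chainF_length (fun r' h => hgood r' (by omega)))

end Chain
/-- Lemma 3.3: if `K` is compact and `H ⊆ K` is nonempty and closed, then there is a
`≺`-minimal `j ∈ Σ` with `H ∩ closure I(j) ≠ ∅`; moreover `H ∩ closure I(j) ⊆ I(j)`,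
and there is a unique nonempty finite `𝓜 ⊆ 𝓘(j)` such that `H ∩ M ≠ ∅` for all
`M ∈ 𝓜` and `H ⊆ G(j,𝓜)`. -/
theorem lemma_3_3 {K : Type*} [TopologicalSpace K] [CompactSpace K] [T2Space K]
    (𝓘 : ℕ → Set (Set K))
    (hreg : ∀ i : ℕ, IsRegularIsolatedFamily (𝓘 i))
    (hcover : ⋃₀ (⋃ i : ℕ, 𝓘 i) = Set.univ)
    (H : Set K) (hHne : H.Nonempty) (hHcl : IsClosed H) :
    ∃ jl : List ℕ, SigmaMem jl ∧ (H ∩ closure (ISet 𝓘 jl)).Nonempty ∧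
      (∀ a : List ℕ, SigmaMem a → (H ∩ closure (ISet 𝓘 a)).Nonempty → ¬ SLt a jl) ∧
      H ∩ closure (ISet 𝓘 jl) ⊆ ISet 𝓘 jl ∧
      ∃! 𝓜 : Set (Set K), 𝓜 ⊆ fam 𝓘 jl ∧ 𝓜.Nonempty ∧ 𝓜.Finite ∧
        (∀ M ∈ 𝓜, (H ∩ M).Nonempty) ∧ H ⊆ Gset 𝓘 jl 𝓜 := by
  classical
  have hcov : ∀ x : K, ∃ m, x ∈ ⋃₀ 𝓘 m := by
    intro x
    have hx : x ∈ ⋃₀ ⋃ i : ℕ, 𝓘 i := by rw [hcover]; trivial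
    obtain ⟨N, hN, hxN⟩ := hx
    obtain ⟨m, hm⟩ := Set.mem_iUnion.mp hN
    exact ⟨m, N, hm, hxN⟩
  have hext0 : ExtP 𝓘 H [] := by
    obtain ⟨x, hx⟩ := hHne
    obtain ⟨m, hm⟩ := hcov x
    refine ⟨m, ⟨by simp, List.isChain_singleton m⟩, ⟨x, hx, ?_⟩⟩
    rw [List.nil_append, ISet_singleton]
    exact subset_closure hm
  -- termination of the greedy construction
  have hterm : ∃ k, ¬ ExtP 𝓘 H (chainF 𝓘 H k) := by
    by_contra hc
    have hc' : ∀ k, ExtP 𝓘 H (chainF 𝓘 H k) := fun k => not_not.mp (not_exists.mp hc k)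
    have hlen : ∀ k, (chainF 𝓘 H k).length = k := fun k => chainF_length (fun r _ => hc' r)
    have hspec : ∀ k, SigmaMem (chainF 𝓘 H (k + 1)) ∧
        (H ∩ closure (ISet 𝓘 (chainF 𝓘 H (k + 1)))).Nonempty :=
      fun k => chainF_spec (by omega) (fun r _ => hc' r)
    have hne' : ∀ k, chainF 𝓘 H (k + 1) ≠ [] := by
      intro k hk
      have := hlen (k + 1)
      rw [hk] at this
      simp at this
    have hproper : ∀ k, chainF 𝓘 H (k + 1) ≠ chainF 𝓘 H (k + 2) := by
      intro k hk
      have h1 := hlen (k + 1)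
      have h2 := hlen (k + 2)
      rw [hk] at h1; omega
    set S : ℕ → Set K := fun n => H ∩ closure (ISet 𝓘 (chainF 𝓘 H (n + 1))) with hS
    have hSne : ∀ n, (S n).Nonempty := fun n => (hspec n).2
    have hScl : ∀ n, IsClosed (S n) := fun n => hHcl.inter isClosed_closure
    have hSdec : ∀ n, S (n + 1) ⊆ S n := by
      intro n
      apply Set.inter_subset_inter_right
      exact closure_ISet_mono hreg (hne' n) (chainF_mono (by omega))
    obtain ⟨x, hx⟩ := IsCompact.nonempty_iInter_of_sequence_nonempty_isCompact_isClosed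
      S hSdec hSne ((hScl 0).isCompact) hScl
    have hxS : ∀ n, x ∈ S n := fun n => Set.mem_iInter.mp hx n
    have hxH : x ∈ H := (hxS 0).1
    have hxJ : ∀ k, x ∈ JSet 𝓘 (chainF 𝓘 H (k + 1)) := by
      intro k
      apply closure_ISet_prefix hreg (hne' k) (chainF_mono (by omega)) (hproper k)
      exact (hxS (k + 1)).2
    obtain ⟨m, hm⟩ := hcov x
    obtain ⟨s, hsle, hsig, hxI, hms⟩ := escape hreg (hspec m).1 (hxJ m) hm
    rw [hlen (m + 1)] at hsle
    rcases eq_or_lt_of_le hsle with heq | hlt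
    · -- s = m+1 : impossible since entries grow
      have htk : (chainF 𝓘 H (m + 1)).take s = chainF 𝓘 H (m + 1) :=
        List.take_of_length_le (by rw [hlen]; omega)
      rw [htk] at hsig
      have hpw := List.isChain_iff_pairwise.mp hsig.2
      rw [List.pairwise_append] at hpw
      have hmem : (chainF 𝓘 H (m + 1))[m]'(by rw [hlen]; omega) ∈ chainF 𝓘 H (m + 1) :=
        List.getElem_mem _
      have h1 : (chainF 𝓘 H (m + 1))[m]'(by rw [hlen]; omega) < m :=
        hpw.2.2 _ hmem m (by simp)
      have h2 : m ≤ (chainF 𝓘 H (m + 1))[m]'(by rw [hlen]; omega) :=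
        chain'_lt_le_getElem ((hspec m).1).2 m (by rw [hlen]; omega)
      omega
    · -- s < m+1 : contradicts minimality of the greedy choice
      have htk : (chainF 𝓘 H (m + 1)).take s = chainF 𝓘 H s :=
        chainF_take (by omega) (fun r _ => hc' r)
      rw [htk] at hsig hxI
      have hfind : (chainF 𝓘 H (m + 1))[s]'(by rw [hlen]; omega) = Nat.find (hc' s) :=
        chainF_getElem hlt (fun r _ => hc' r) (hc' s) (by rw [hlen]; omega)
      have hmlt : m < Nat.find (hc' s) := by
        rw [← hfind]; exact hms (by rw [hlen]; omega)
      exact Nat.find_min (hc' s) hmlt ⟨hsig, ⟨x, hxH, subset_closure hxI⟩⟩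
  -- the minimal sequence
  set k0 := Nat.find hterm with hk0def
  have hk0 : ¬ ExtP 𝓘 H (chainF 𝓘 H k0) := Nat.find_spec hterm
  have hgood : ∀ r < k0, ExtP 𝓘 H (chainF 𝓘 H r) :=
    fun r hr => not_not.mp (Nat.find_min hterm hr)
  have hk0pos : 0 < k0 := by
    rcases Nat.eq_zero_or_pos k0 with h | h
    · exfalso; apply hk0; rw [h]; exact hext0
    · exact h
  set jl := chainF 𝓘 H k0 with hjldef
  have hjlsig : SigmaMem jl := (chainF_spec hk0pos hgood).1
  have hjlne' : (H ∩ closure (ISet 𝓘 jl)).Nonempty := (chainF_spec hk0pos hgood).2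
  have hjllen : jl.length = k0 := chainF_length hgood
  have hjlne : jl ≠ [] := by
    intro h; rw [h] at hjllen; simp at hjllen; omega
  -- minimality
  have hmin : ∀ a : List ℕ, SigmaMem a → (H ∩ closure (ISet 𝓘 a)).Nonempty → ¬ SLt a jl := by
    rintro a ha hane (⟨r, xv, yv, hagr, hax, hjy, hxy⟩ | ⟨hpre, hnee⟩)
    · obtain ⟨hra, haxv⟩ := List.getElem?_eq_some_iff.mp hax
      obtain ⟨hrj, hjyv⟩ := List.getElem?_eq_some_iff.mp hjy
      have hrk0 : r < k0 := by rw [← hjllen]; exact hrj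
      have h1 : a.take r = jl.take r := by
        apply List.ext_getElem?
        intro t
        rw [List.getElem?_take, List.getElem?_take]
        by_cases ht : t < r
        · rw [if_pos ht, if_pos ht]; exact hagr t ht
        · rw [if_neg ht, if_neg ht]
      have h2 : jl.take r = chainF 𝓘 H r := chainF_take (by omega) hgood
      have h3 : a.take (r + 1) = chainF 𝓘 H r ++ [xv] := by
        rw [List.take_succ, hax, h1, h2]; rfl
      have hsig' : SigmaMem (chainF 𝓘 H r ++ [xv]) := by
        refine ⟨by simp, ?_⟩
        rw [← h3]
        exact List.IsChain.take ha.2 (r + 1)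
      have hne3 : chainF 𝓘 H r ++ [xv] ≠ [] := by simp
      have hmono : closure (ISet 𝓘 a) ⊆ closure (ISet 𝓘 (chainF 𝓘 H r ++ [xv])) := by
        apply closure_ISet_mono hreg hne3
        rw [← h3]
        exact List.take_prefix _ _
      have hane' : (H ∩ closure (ISet 𝓘 (chainF 𝓘 H r ++ [xv]))).Nonempty :=
        hane.mono (Set.inter_subset_inter_right _ hmono)
      have hfind : jl[r]'hrj = Nat.find (hgood r hrk0) :=
        chainF_getElem hrk0 hgood (hgood r hrk0) hrj
      have hxvlt : xv < Nat.find (hgood r hrk0) := by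
        rw [← hfind, hjyv]; exact hxy
      exact Nat.find_min (hgood r hrk0) hxvlt ⟨hsig', hane'⟩
    · obtain ⟨t, ht⟩ := hpre
      have htne : t ≠ [] := by
        intro h; rw [h, List.append_nil] at ht; exact hnee ht
      obtain ⟨n, t', rfl⟩ := List.exists_cons_of_ne_nil htne
      apply hk0
      refine ⟨n, ?_, ?_⟩
      · refine ⟨by simp, ?_⟩
        have h4 : a.take (jl.length + 1) = jl ++ [n] := by
          rw [← ht, List.take_append]
          simp
        rw [← h4]
        exact List.IsChain.take ha.2 _
      · apply hane.mono
        apply Set.inter_subset_inter_right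
        apply closure_ISet_mono hreg (by simp)
        refine ⟨t', ?_⟩
        rw [← List.append_cons]
        exact ht
  -- H ∩ closure I(jl) ⊆ I(jl)
  have hsub : H ∩ closure (ISet 𝓘 jl) ⊆ ISet 𝓘 jl := by
    rintro x ⟨hxH, hxC⟩
    by_contra hxI
    obtain ⟨m, hm⟩ := hcov x
    obtain ⟨s, hsle, hsig, hxI', hms⟩ := escape hreg hjlsig ⟨hxC, hxI⟩ hm
    exact hmin _ hsig ⟨x, hxH, subset_closure hxI'⟩ (slt_take_append hsle hms)
  -- the family 𝓜
  have hprops := fam_props hreg (𝓘 := 𝓘) hjlne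
  have hMsubI : ∀ M ∈ fam 𝓘 jl, M ⊆ ISet 𝓘 jl := fun M hM x hx => ⟨M, hM, hx⟩
  have hdis : ∀ M ∈ fam 𝓘 jl, ∀ M' ∈ fam 𝓘 jl, M ≠ M' → M ∩ M' = ∅ := by
    intro M hM M' hM' hne
    apply Set.eq_empty_of_subset_empty
    intro x hx
    have h1 := (hprops.1 M hM).1
    have h2 : x ∈ M ∩ closure (⋃₀ (fam 𝓘 jl \ {M})) := by
      refine ⟨hx.1, subset_closure ⟨M', ⟨hM', ?_⟩, hx.2⟩⟩
      simp only [Set.mem_singleton_iff]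
      exact fun h => hne h.symm
    rw [h1] at h2
    exact h2
  set 𝓜 : Set (Set K) := {M | M ∈ fam 𝓘 jl ∧ (H ∩ M).Nonempty} with h𝓜
  have h𝓜sub : 𝓜 ⊆ fam 𝓘 jl := fun M hM => hM.1
  have h𝓜ne : 𝓜.Nonempty := by
    obtain ⟨x, hxH, hxC⟩ := hjlne'
    obtain ⟨M, hM, hxM⟩ := hsub ⟨hxH, hxC⟩
    exact ⟨M, hM, ⟨x, hxH, hxM⟩⟩
  have h𝓜meet : ∀ M ∈ 𝓜, (H ∩ M).Nonempty := fun M hM => hM.2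
  -- finiteness
  have h𝓜fin : 𝓜.Finite := by
    choose U hUo hMeq using fun (M : Set K) (hM : M ∈ fam 𝓘 jl) => (hprops.1 M hM).2
    have hcomp : IsCompact (H ∩ closure (ISet 𝓘 jl)) :=
      (hHcl.inter isClosed_closure).isCompact
    have hcov' : H ∩ closure (ISet 𝓘 jl) ⊆
        ⋃ (M : ↥(fam 𝓘 jl)), U M.1 M.2 := by
      intro x hx
      obtain ⟨M, hM, hxM⟩ := hsub hx
      have : x ∈ U M hM := by
        have := hMeq M hM
        rw [this] at hxM
        exact hxM.2
      exact Set.mem_iUnion.mpr ⟨⟨M, hM⟩, this⟩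
    obtain ⟨t, hts⟩ := hcomp.elim_finite_subcover (fun (M : ↥(fam 𝓘 jl)) => U M.1 M.2) (fun M => hUo M.1 M.2) hcov'
    apply Set.Finite.subset (Set.Finite.image (fun (M : ↥(fam 𝓘 jl)) => (M : Set K)) t.finite_toSet)
    intro M hM
    obtain ⟨hMfam, x, hxH, hxM⟩ := hM
    have hxH' : x ∈ H ∩ closure (ISet 𝓘 jl) :=
      ⟨hxH, subset_closure (hMsubI M hMfam hxM)⟩
    obtain ⟨M', hM't, hxU⟩ := Set.mem_iUnion₂.mp (hts hxH')
    have hxM' : x ∈ (M' : Set K) := by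
      rw [hMeq M'.1 M'.2]
      exact ⟨hxH'.2, hxU⟩
    have hMM' : M = (M' : Set K) := by
      by_contra hne
      have := hdis M hMfam M'.1 M'.2 hne
      rw [Set.eq_empty_iff_forall_notMem] at this
      exact this x ⟨hxM, hxM'⟩
    exact ⟨M', hM't, hMM'.symm⟩
  -- H ⊆ G(jl, 𝓜)
  have hG : H ⊆ Gset 𝓘 jl 𝓜 := by
    intro x hxH
    rw [Gset, Set.mem_compl_iff]
    rintro (⟨S, ⟨a, hsa, hslt', rfl⟩, hxS⟩ | hxcl)
    · exact hmin a hsa ⟨x, hxH, hxS⟩ hslt'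
    · have hsub2 : ⋃₀ (fam 𝓘 jl \ 𝓜) ⊆ ISet 𝓘 jl := by
        rintro y ⟨M, hM, hy⟩
        exact ⟨M, hM.1, hy⟩
      have hxC : x ∈ closure (ISet 𝓘 jl) := closure_mono hsub2 hxcl
      obtain ⟨M, hM, hxM⟩ := hsub ⟨hxH, hxC⟩
      have hM𝓜 : M ∈ 𝓜 := ⟨hM, ⟨x, hxH, hxM⟩⟩
      have hsub3 : ⋃₀ (fam 𝓘 jl \ 𝓜) ⊆ ⋃₀ (fam 𝓘 jl \ {M}) := by
        rintro y ⟨M', hM', hy⟩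
        refine ⟨M', ⟨hM'.1, ?_⟩, hy⟩
        simp only [Set.mem_singleton_iff]
        rintro rfl
        exact hM'.2 hM𝓜
      have h1 := (hprops.1 M hM).1
      rw [Set.eq_empty_iff_forall_notMem] at h1
      exact h1 x ⟨hxM, closure_mono hsub3 hxcl⟩
  refine ⟨jl, hjlsig, hjlne', hmin, hsub, 𝓜, ⟨h𝓜sub, h𝓜ne, h𝓜fin, h𝓜meet, hG⟩, ?_⟩
  -- uniqueness
  rintro 𝓜' ⟨hsub', hne'', hfin', hmeet', hG'⟩
  ext M
  constructor
  · intro hM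
    exact ⟨hsub' hM, hmeet' M hM⟩
  · rintro ⟨hMfam, x, hxH, hxM⟩
    by_contra hM'
    have hx1 : x ∈ closure (⋃₀ (fam 𝓘 jl \ 𝓜')) :=
      subset_closure ⟨M, ⟨hMfam, hM'⟩, hxM⟩
    have := hG' hxH
    rw [Gset, Set.mem_compl_iff] at this
    exact this (Or.inr hx1)
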